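/- Let P_1, ..., P_d be finite point sets in R^d and let H_p, H_q be two distinct hyperplanes, each affinely spanned by a colorful set (one point from each P_i), with the same α-vector, such that R = H_p ∩ H_q is a (d−2)-flat disjoint from conv(P_i) for every i. Then there exist points z_1 ∈ conv(P_1), ..., z_d ∈ conv(P_d) whose affine hull has dimension at most d−2; in particular P_1, ..., P_d are not well-separated. -/

import Mathlib

/-
Rotate a hyperplane about `R = H_p ∩ H_q` through the pencil
`⟪y, lineMap np (-nq) s⟫ = lineMap tp (-tq) s`, `s ∈ [0, 1]`, which starts at `H_p` and ends at
`H_q` with the reversed normal `-nq`. Equality of the α-vectors gives, for every colour `i`, a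
point `m i ∈ conv (P i)` such that the segment `[p i, m i]` crosses every hyperplane of the pencil
exactly once: either `q i`, or a point of `P i` counted in one α-entry but not in the other (the
disjointness of `R` from `conv (P i)` excludes the degenerate positions). The crossing points move
continuously, and so does the orientation determinant `det [(z i, 1) | (n, 0)]`, which is positive
at `s = 0`. If it is nonpositive at `s = 1`, the intermediate value theorem gives a zero along the
rotation; otherwise slide the crossing points to `q` inside `H_q`, where the determinant with
normal `-nq` is negative. Points on a common hyperplane whose orientation determinant vanishes are
affinely dependent.
-/

open Set
open scoped RealInnerProductSpace

/-- `P` is well-separated: every colorful selection of points, one from the convex hull of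
each of `k` distinct color classes, is affinely independent. -/
def WellSeparated {d : ℕ} (P : Fin d → Finset (EuclideanSpace ℝ (Fin d))) : Prop :=
  ∀ (k : ℕ) (ι : Fin k → Fin d), Function.Injective ι →
    ∀ y : Fin k → EuclideanSpace ℝ (Fin d),
      (∀ j, y j ∈ convexHull ℝ (P (ι j) : Set (EuclideanSpace ℝ (Fin d)))) →
      AffineIndependent ℝ y

/-- The `(d+1) × (d+1)` matrix whose first `d` columns are the points `x j` with a `1`
appended, and whose last column is `v` with `c` appended. -/
def colMat {d : ℕ} (x : Fin d → EuclideanSpace ℝ (Fin d))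
    (v : EuclideanSpace ℝ (Fin d)) (c : ℝ) : Matrix (Fin (d + 1)) (Fin (d + 1)) ℝ :=
  Matrix.of fun i j =>
    if hi : (i : ℕ) < d then
      (if hj : (j : ℕ) < d then x ⟨j, hj⟩ ⟨i, hi⟩ else v ⟨i, hi⟩)
    else
      (if (j : ℕ) < d then (1 : ℝ) else c)

open AffineMap

theorem Set.exists_mem_notMem_of_ncard_eq {α : Type*} {S T : Set α} (hT : T.Finite)
    (h : S.ncard = T.ncard) {x : α} (hxT : x ∈ T) (hxS : x ∉ S) : ∃ y ∈ S, y ∉ T := by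
  by_contra! hST
  exact (Set.ncard_lt_ncard ⟨hST, fun hTS => hxS (hTS hxT)⟩ hT).ne h

section Crossing

variable {E : Type*} [NormedAddCommGroup E] [InnerProductSpace ℝ E]

/-- The hyperplane `⟪·, n⟫ = c` meets the segment `[a, b]` in exactly one point. -/
def CrossesSegment (n : E) (c : ℝ) (a b : E) : Prop :=
  (⟪a, n⟫ - c) * (⟪b, n⟫ - c) ≤ 0 ∧ ⟪a, n⟫ ≠ ⟪b, n⟫

noncomputable def lineCrossing (n : E) (c : ℝ) (a b : E) : E :=
  lineMap a b ((⟪a, n⟫ - c) / (⟪a, n⟫ - ⟪b, n⟫))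

theorem inner_lineMap_left (a b n : E) (t : ℝ) :
    ⟪lineMap a b t, n⟫ = lineMap ⟪a, n⟫ ⟪b, n⟫ t := by
  simp only [lineMap_apply_module, inner_add_left, real_inner_smul_left, smul_eq_mul]

theorem inner_lineCrossing {n : E} {a b : E} (c : ℝ) (h : ⟪a, n⟫ ≠ ⟪b, n⟫) :
    ⟪lineCrossing n c a b, n⟫ = c := by
  have := sub_ne_zero.2 h
  rw [lineCrossing, inner_lineMap_left, lineMap_apply_ring']
  field_simp
  ring

theorem lineCrossing_mem {C : Set E} (hC : Convex ℝ C) {n a b : E} {c : ℝ} (ha : a ∈ C)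
    (hb : b ∈ C) (h : CrossesSegment n c a b) : lineCrossing n c a b ∈ C := by
  refine hC.lineMap_mem ha hb ?_
  obtain ⟨hsign, hne⟩ := h
  rcases (sub_ne_zero.2 hne).lt_or_gt with hlt | hlt
  · exact ⟨div_nonneg_of_nonpos (by nlinarith) hlt.le, (div_le_one_of_neg hlt).2 (by nlinarith)⟩
  · exact ⟨div_nonneg (by nlinarith) hlt.le, (div_le_one hlt).2 (by nlinarith)⟩

theorem ContinuousOn.lineCrossing {n : ℝ → E} {c : ℝ → ℝ} {S : Set ℝ} {a b : E}
    (hn : ContinuousOn n S) (hc : ContinuousOn c S) (h : ∀ s ∈ S, ⟪a, n s⟫ ≠ ⟪b, n s⟫) :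
    ContinuousOn (fun s => _root_.lineCrossing (n s) (c s) a b) S :=
  lineMap_continuous.comp_continuousOn <|
    ((continuousOn_const.inner hn).sub hc).div
      ((continuousOn_const.inner hn).sub (continuousOn_const.inner hn))
      fun s hs => sub_ne_zero.2 (h s hs)

theorem exists_mem_segment_inner_eq_inner_eq {a b np nq : E} {tp tq : ℝ} (ha : ⟪a, np⟫ = tp)
    (hb : ⟪b, np⟫ = tp) (hab : (⟪a, nq⟫ - tq) * (⟪b, nq⟫ - tq) < 0) :
    ∃ y ∈ segment ℝ a b, ⟪y, np⟫ = tp ∧ ⟪y, nq⟫ = tq := by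
  have hne : ⟪a, nq⟫ ≠ ⟪b, nq⟫ := fun h => by
    rw [h] at hab
    exact (mul_self_nonneg _).not_gt hab
  refine ⟨lineCrossing nq tq a b, lineCrossing_mem (convex_segment a b) (left_mem_segment ℝ a b)
    (right_mem_segment ℝ a b) ⟨hab.le, hne⟩, ?_, inner_lineCrossing tq hne⟩
  rw [lineCrossing, inner_lineMap_left, ha, hb, lineMap_same_apply]

end Crossing

section Pencil

variable {E : Type*} [NormedAddCommGroup E] [InnerProductSpace ℝ E]

theorem inner_lineMap_sub_lineMap (y np nq : E) (tp tq s : ℝ) :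
    ⟪y, lineMap np (-nq) s⟫ - lineMap tp (-tq) s =
      (1 - s) * (⟪y, np⟫ - tp) - s * (⟪y, nq⟫ - tq) := by
  simp only [lineMap_apply_module, inner_add_right, real_inner_smul_right, inner_neg_right,
    smul_eq_mul]
  ring

theorem lineMap_neg_ne_zero {np nq : E} (hnp : np ≠ 0) (hpar : ∀ c : ℝ, nq ≠ c • np) (s : ℝ) :
    lineMap np (-nq) s ≠ 0 := by
  intro h
  rw [lineMap_apply_module, smul_neg, ← sub_eq_add_neg, sub_eq_zero] at h
  rcases eq_or_ne s 0 with rfl | hs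
  · simp_all
  · exact hpar ((1 - s) / s) (by rw [div_eq_inv_mul, mul_smul, h, inv_smul_smul₀ hs])

theorem crossesSegment_lineMap_of_sign {p m np nq : E} {tp tq s : ℝ} (hpt : ⟪p, np⟫ = tp)
    (hA : 0 < (⟪m, np⟫ - tp) * (⟪p, nq⟫ - tq)) (hB : (⟪m, nq⟫ - tq) * (⟪p, nq⟫ - tq) ≤ 0)
    (hs : s ∈ Icc (0 : ℝ) 1) :
    CrossesSegment (lineMap np (-nq) s) (lineMap tp (-tq) s) p m := by
  obtain ⟨hs0, hs1⟩ := hs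
  refine ⟨?_, fun h => ?_⟩
  · rw [inner_lineMap_sub_lineMap, inner_lineMap_sub_lineMap, hpt, sub_self, mul_zero, zero_sub]
    nlinarith [mul_nonneg hs0 (sub_nonneg.2 hs1), mul_nonneg hs0 hs0]
  · have h' := congrArg (· - lineMap tp (-tq) s) h
    simp only [inner_lineMap_sub_lineMap, hpt, sub_self, mul_zero, zero_sub] at h'
    have h'' := congrArg (· * (⟪p, nq⟫ - tq)) h'
    rcases hs1.lt_or_eq with hs1 | rfl
    · nlinarith [mul_nonneg hs0 (sq_nonneg (⟪p, nq⟫ - tq)), mul_pos (sub_pos.2 hs1) hA]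
    · have hc : ⟪m, nq⟫ - tq = ⟪p, nq⟫ - tq := by linarith
      rw [hc] at hB
      simp [mul_self_eq_zero.1 (hB.antisymm (mul_self_nonneg _))] at hA

theorem exists_mem_convexHull_mul_pos_and_mul_nonpos {P : Finset E} {p q np nq : E} {tp tq : ℝ}
    (hp : p ∈ P) (hq : q ∈ P) (hpt : ⟪p, np⟫ = tp) (hqt : ⟪q, nq⟫ = tq)
    (halpha : {y ∈ (P : Set E) | tp ≤ ⟪y, np⟫}.ncard = {y ∈ (P : Set E) | tq ≤ ⟪y, nq⟫}.ncard)
    (hR : ∀ y ∈ convexHull ℝ (P : Set E), ⟪y, np⟫ = tp → ⟪y, nq⟫ ≠ tq) :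
    ∃ m ∈ convexHull ℝ (P : Set E),
      0 < (⟪m, np⟫ - tp) * (⟪p, nq⟫ - tq) ∧ (⟪m, nq⟫ - tq) * (⟪p, nq⟫ - tq) ≤ 0 := by
  have hfin : ∀ f : E → Prop, {y ∈ (P : Set E) | f y}.Finite :=
    fun f => P.finite_toSet.subset fun y hy => hy.1
  have hc : ⟪p, nq⟫ - tq ≠ 0 := fun h => hR p (subset_convexHull ℝ _ hp) hpt (by linarith)
  have hb : ⟪q, np⟫ - tp ≠ 0 := fun h => hR q (subset_convexHull ℝ _ hq) (by linarith) hqt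
  rcases hc.lt_or_gt with hc | hc
  · obtain ⟨w, ⟨hwP, hwq⟩, hwp⟩ := Set.exists_mem_notMem_of_ncard_eq (hfin _) halpha.symm
      (x := p) ⟨hp, hpt.ge⟩ fun h => by linarith [h.2]
    have hwp : ⟪w, np⟫ < tp := lt_of_not_ge fun h => hwp ⟨hwP, h⟩
    exact ⟨w, subset_convexHull ℝ _ hwP, by nlinarith, by nlinarith⟩
  rcases hb.lt_or_gt with hb | hb
  · obtain ⟨w, ⟨hwP, hwp⟩, hwq⟩ := Set.exists_mem_notMem_of_ncard_eq (hfin _) halpha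
      (x := q) ⟨hq, hqt.ge⟩ fun h => by linarith [h.2]
    have hwq : ⟪w, nq⟫ < tq := lt_of_not_ge fun h => hwq ⟨hwP, h⟩
    -- `w` cannot lie on `H_p`: the segment from `p` to `w` would then cross `R`
    have hwp : tp < ⟪w, np⟫ := hwp.lt_of_ne fun h => by
      obtain ⟨y, hy, hyp, hyq⟩ := exists_mem_segment_inner_eq_inner_eq hpt h.symm
        (mul_neg_of_pos_of_neg hc (sub_neg.2 hwq))
      exact hR y (segment_subset_convexHull hp hwP hy) hyp hyq
    exact ⟨w, subset_convexHull ℝ _ hwP, by nlinarith, by nlinarith⟩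
  · exact ⟨q, subset_convexHull ℝ _ hq, mul_pos hb hc, by simp [hqt]⟩

end Pencil

theorem continuous_colMat {d : ℕ} (c : ℝ) :
    Continuous fun xv : (Fin d → EuclideanSpace ℝ (Fin d)) × EuclideanSpace ℝ (Fin d) =>
      colMat xv.1 xv.2 c := by
  refine continuous_matrix fun i j => ?_
  simp only [colMat, Matrix.of_apply]
  split_ifs <;> fun_prop

theorem colMat_mulVec_castSucc {d : ℕ} (x : Fin d → EuclideanSpace ℝ (Fin d))
    (v : EuclideanSpace ℝ (Fin d)) (c : ℝ) (u : Fin (d + 1) → ℝ) (k : Fin d) :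
    (colMat x v c).mulVec u k.castSucc = (∑ j, u j.castSucc • x j + u (Fin.last d) • v) k := by
  simp [Matrix.mulVec, dotProduct, Fin.sum_univ_castSucc, colMat, WithLp.ofLp_sum, mul_comm]

theorem colMat_mulVec_last {d : ℕ} (x : Fin d → EuclideanSpace ℝ (Fin d))
    (v : EuclideanSpace ℝ (Fin d)) (c : ℝ) (u : Fin (d + 1) → ℝ) :
    (colMat x v c).mulVec u (Fin.last d) = ∑ j : Fin d, u j.castSucc + c * u (Fin.last d) := by
  simp [Matrix.mulVec, dotProduct, Fin.sum_univ_castSucc, colMat, mul_comm]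

theorem not_affineIndependent_of_det_colMat_eq_zero {d : ℕ} {x : Fin d → EuclideanSpace ℝ (Fin d)}
    {n : EuclideanSpace ℝ (Fin d)} {c : ℝ} (hn : n ≠ 0) (hx : ∀ i, ⟪x i, n⟫ = c)
    (hdet : (colMat x n 0).det = 0) : ¬ AffineIndependent ℝ x := by
  intro hind
  obtain ⟨u, hu0, hu⟩ := Matrix.exists_mulVec_eq_zero_iff.2 hdet
  have hsum : ∑ j : Fin d, u j.castSucc = 0 := by
    simpa [colMat_mulVec_last] using congrFun hu (Fin.last d)
  have hvec : ∑ j, u j.castSucc • x j + u (Fin.last d) • n = 0 := by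
    ext k
    simpa [colMat_mulVec_castSucc] using congrFun hu k.castSucc
  -- pairing with `n` kills the point columns, since they all lie on `⟪·, n⟫ = c`
  have hlast : u (Fin.last d) = 0 := by
    have h := congrArg (⟪·, n⟫) hvec
    simp only [inner_add_left, sum_inner, real_inner_smul_left, hx, ← Finset.sum_mul, hsum,
      zero_mul, zero_add, inner_zero_left, mul_eq_zero] at h
    exact h.resolve_right (inner_self_ne_zero.2 hn)
  have hpoints : ∀ j : Fin d, u j.castSucc = 0 := fun j =>
    affineIndependent_iff.1 hind Finset.univ _ hsum (by simpa [hlast] using hvec) j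
      (Finset.mem_univ j)
  exact hu0 (funext fun i => Fin.lastCases hlast hpoints i)

theorem det_colMat_neg {d : ℕ} (x : Fin d → EuclideanSpace ℝ (Fin d))
    (n : EuclideanSpace ℝ (Fin d)) :
    (colMat x (-n) 0).det = -(colMat x n 0).det := by
  have h : colMat x (-n) 0 =
      colMat x n 0 * Matrix.diagonal (Fin.lastCases (-1) fun _ => 1) := by
    ext i j
    rw [Matrix.mul_diagonal]
    induction j using Fin.lastCases <;> by_cases hi : (i : ℕ) < d <;> simp [colMat, hi]
  rw [h, Matrix.det_mul, Matrix.det_diagonal, Fin.prod_univ_castSucc]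
  simp

theorem exists_not_affineIndependent_of_det_colMat_sign_change {d : ℕ} {a b : ℝ} (hab : a ≤ b)
    {x : ℝ → Fin d → EuclideanSpace ℝ (Fin d)} {n : ℝ → EuclideanSpace ℝ (Fin d)} {c : ℝ → ℝ}
    (hx : ContinuousOn x (Icc a b)) (hn : ContinuousOn n (Icc a b))
    (hn0 : ∀ t ∈ Icc a b, n t ≠ 0) (hxn : ∀ t ∈ Icc a b, ∀ i, ⟪x t i, n t⟫ = c t)
    (hb : (colMat (x b) (n b) 0).det ≤ 0) (ha : 0 ≤ (colMat (x a) (n a) 0).det) :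
    ∃ t ∈ Icc a b, ¬ AffineIndependent ℝ (x t) := by
  obtain ⟨t, ht, hdet⟩ := intermediate_value_Icc' hab
    ((continuous_colMat 0).matrix_det.comp_continuousOn (hx.prodMk hn)) ⟨hb, ha⟩
  exact ⟨t, ht, not_affineIndependent_of_det_colMat_eq_zero (hn0 t ht) (hxn t ht) hdet⟩

theorem finrank_direction_affineSpan_le_of_not_affineIndependent {k V : Type*} [DivisionRing k]
    [AddCommGroup V] [Module k V] {d : ℕ} {z : Fin d → V} (h : ¬ AffineIndependent k z) :
    (Module.finrank k (affineSpan k (range z)).direction : ℤ) ≤ d - 2 := by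
  obtain ⟨m, rfl⟩ : ∃ m, d = m + 2 := by
    refine ⟨d - 2, (Nat.sub_add_cancel ?_).symm⟩
    by_contra! hd
    have := Fin.subsingleton_iff_le_one.2 (Nat.le_of_lt_succ hd)
    exact h (affineIndependent_of_subsingleton k z)
  rw [direction_affineSpan]
  have := (finrank_vectorSpan_le_iff_not_affineIndependent k z (Fintype.card_fin _)).2 h
  push_cast
  omega

theorem exists_not_affineIndependent_mem_convexHull {d : ℕ}
    (P : Fin d → Finset (EuclideanSpace ℝ (Fin d))) (p q : Fin d → EuclideanSpace ℝ (Fin d))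
    (np nq : EuclideanSpace ℝ (Fin d)) (tp tq : ℝ) (hp : ∀ i, p i ∈ P i) (hq : ∀ i, q i ∈ P i)
    (hnp : np ≠ 0) (hpt : ∀ i, ⟪p i, np⟫ = tp) (hqt : ∀ i, ⟪q i, nq⟫ = tq)
    (hdp : 0 < (colMat p np 0).det) (hdq : 0 < (colMat q nq 0).det)
    (hpar : ∀ c : ℝ, nq ≠ c • np)
    (halpha : ∀ i, {y ∈ (P i : Set (EuclideanSpace ℝ (Fin d))) | tp ≤ ⟪y, np⟫}.ncard =
      {y ∈ (P i : Set (EuclideanSpace ℝ (Fin d))) | tq ≤ ⟪y, nq⟫}.ncard)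
    (hR : ∀ i, ∀ y ∈ convexHull ℝ (P i : Set (EuclideanSpace ℝ (Fin d))),
      ⟪y, np⟫ = tp → ⟪y, nq⟫ ≠ tq) :
    ∃ z : Fin d → EuclideanSpace ℝ (Fin d),
      (∀ i, z i ∈ convexHull ℝ (P i : Set (EuclideanSpace ℝ (Fin d)))) ∧
      ¬ AffineIndependent ℝ z := by
  choose m hmP hm using fun i =>
    exists_mem_convexHull_mul_pos_and_mul_nonpos (hp i) (hq i) (hpt i) (hqt i) (halpha i) (hR i)
  have hcross : ∀ s ∈ Icc (0 : ℝ) 1, ∀ i,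
      CrossesSegment (lineMap np (-nq) s) (lineMap tp (-tq) s) (p i) (m i) :=
    fun s hs i => crossesSegment_lineMap_of_sign (hpt i) (hm i).1 (hm i).2 hs
  set z : ℝ → Fin d → EuclideanSpace ℝ (Fin d) := fun s i =>
    lineCrossing (lineMap np (-nq) s) (lineMap tp (-tq) s) (p i) (m i) with hz
  have hz_mem : ∀ s ∈ Icc (0 : ℝ) 1, ∀ i, z s i ∈ convexHull ℝ (P i : Set _) := fun s hs i =>
    lineCrossing_mem (convex_convexHull ℝ _) (subset_convexHull ℝ _ (hp i)) (hmP i) (hcross s hs i)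
  have hz_inner : ∀ s ∈ Icc (0 : ℝ) 1, ∀ i, ⟪z s i, lineMap np (-nq) s⟫ = lineMap tp (-tq) s :=
    fun s hs i => inner_lineCrossing _ (hcross s hs i).2
  have hz0 : z 0 = p := funext fun i => by simp [hz, lineCrossing, hpt]
  rcases le_or_gt (colMat (z 1) (-nq) 0).det 0 with h1 | h1
  · obtain ⟨s, hs, hdep⟩ := exists_not_affineIndependent_of_det_colMat_sign_change zero_le_one
      (x := z) (continuousOn_pi.2 fun i => ContinuousOn.lineCrossing lineMap_continuous.continuousOn
        lineMap_continuous.continuousOn fun s hs => (hcross s hs i).2)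
      lineMap_continuous.continuousOn (fun s _ => lineMap_neg_ne_zero hnp hpar s) hz_inner
      (by rwa [lineMap_apply_one]) (by rw [lineMap_apply_zero, hz0]; exact hdp.le)
    exact ⟨z s, hz_mem s hs, hdep⟩
  · have hone : (1 : ℝ) ∈ Icc (0 : ℝ) 1 := right_mem_Icc.2 zero_le_one
    obtain ⟨θ, hθ, hdep⟩ := exists_not_affineIndependent_of_det_colMat_sign_change zero_le_one
      (x := fun θ i => lineMap (z 1 i) (q i) θ) (n := fun _ => -nq) (c := fun _ => -tq)
      (by fun_prop) continuousOn_const (fun _ _ => neg_ne_zero.2 (by simpa using hpar 0))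
      (fun θ _ i => by
        have h := hz_inner 1 hone i
        simp only [lineMap_apply_one] at h
        rw [inner_lineMap_left, h, inner_neg_right, hqt, lineMap_same_apply])
      (by simpa [det_colMat_neg] using hdq.le) (by simpa using h1.le)
    exact ⟨_, fun i => (convex_convexHull ℝ _).lineMap_mem (hz_mem 1 hone i)
      (subset_convexHull ℝ _ (hq i)) hθ, hdep⟩

theorem degenerate_colorful_selection_of_two_colorful_hyperplanes_same_alpha_general
    {d : ℕ} (P : Fin d → Finset (EuclideanSpace ℝ (Fin d)))
    (p q : Fin d → EuclideanSpace ℝ (Fin d))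
    (np nq : EuclideanSpace ℝ (Fin d)) (tp tq : ℝ)
    (hp : ∀ i, p i ∈ P i) (hq : ∀ i, q i ∈ P i)
    (hnp : ‖np‖ = 1)
    (hpt : ∀ i, ⟪p i, np⟫ = tp) (hqt : ∀ i, ⟪q i, nq⟫ = tq)
    (hdp : 0 < (colMat p np 0).det) (hdq : 0 < (colMat q nq 0).det)
    (hpar : ∀ c : ℝ, nq ≠ c • np)
    (halpha : ∀ i, {y ∈ (P i : Set (EuclideanSpace ℝ (Fin d))) | tp ≤ ⟪y, np⟫}.ncard =
      {y ∈ (P i : Set (EuclideanSpace ℝ (Fin d))) | tq ≤ ⟪y, nq⟫}.ncard)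
    (hRdisj : ∀ i, ({y : EuclideanSpace ℝ (Fin d) | ⟪y, np⟫ = tp} ∩
        {y : EuclideanSpace ℝ (Fin d) | ⟪y, nq⟫ = tq}) ∩
        convexHull ℝ (P i : Set (EuclideanSpace ℝ (Fin d))) = ∅) :
    ∃ z : Fin d → EuclideanSpace ℝ (Fin d),
      (∀ i, z i ∈ convexHull ℝ (P i : Set (EuclideanSpace ℝ (Fin d)))) ∧
      (Module.finrank ℝ (affineSpan ℝ (Set.range z)).direction : ℤ) ≤ (d : ℤ) - 2 ∧
      ¬ WellSeparated P := by
  have hnp0 : np ≠ 0 := norm_ne_zero_iff.1 (by rw [hnp]; exact one_ne_zero)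
  have hR : ∀ i, ∀ y ∈ convexHull ℝ (P i : Set (EuclideanSpace ℝ (Fin d))),
      ⟪y, np⟫ = tp → ⟪y, nq⟫ ≠ tq := fun i y hy hyp hyq =>
    Set.eq_empty_iff_forall_notMem.1 (hRdisj i) y ⟨⟨hyp, hyq⟩, hy⟩
  obtain ⟨z, hz, hdep⟩ := exists_not_affineIndependent_mem_convexHull P p q np nq tp tq hp hq hnp0
    hpt hqt hdp hdq hpar halpha hR
  exact ⟨z, hz, finrank_direction_affineSpan_le_of_not_affineIndependent hdep,
    fun hws => hdep (hws d id Function.injective_id z hz)⟩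

theorem degenerate_colorful_selection_of_two_colorful_hyperplanes_same_alpha
    {d : ℕ} (P : Fin d → Finset (EuclideanSpace ℝ (Fin d)))
    (p q : Fin d → EuclideanSpace ℝ (Fin d))
    (np nq : EuclideanSpace ℝ (Fin d)) (tp tq : ℝ)
    (hp : ∀ i, p i ∈ P i) (hq : ∀ i, q i ∈ P i)
    (hpi : AffineIndependent ℝ p) (hqi : AffineIndependent ℝ q)
    (hnp : ‖np‖ = 1) (hnq : ‖nq‖ = 1)
    (hpt : ∀ i, ⟪p i, np⟫ = tp) (hqt : ∀ i, ⟪q i, nq⟫ = tq)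
    (hdp : 0 < (colMat p np 0).det) (hdq : 0 < (colMat q nq 0).det)
    (hpar : ∀ c : ℝ, nq ≠ c • np)
    (halpha : ∀ i, {y ∈ (P i : Set (EuclideanSpace ℝ (Fin d))) | tp ≤ ⟪y, np⟫}.ncard =
      {y ∈ (P i : Set (EuclideanSpace ℝ (Fin d))) | tq ≤ ⟪y, nq⟫}.ncard)
    (hRdisj : ∀ i, ({y : EuclideanSpace ℝ (Fin d) | ⟪y, np⟫ = tp} ∩
        {y : EuclideanSpace ℝ (Fin d) | ⟪y, nq⟫ = tq}) ∩
        convexHull ℝ (P i : Set (EuclideanSpace ℝ (Fin d))) = ∅) :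
    ∃ z : Fin d → EuclideanSpace ℝ (Fin d),
      (∀ i, z i ∈ convexHull ℝ (P i : Set (EuclideanSpace ℝ (Fin d)))) ∧
      (Module.finrank ℝ (affineSpan ℝ (Set.range z)).direction : ℤ) ≤ (d : ℤ) - 2 ∧
      ¬ WellSeparated P :=
  degenerate_colorful_selection_of_two_colorful_hyperplanes_same_alpha_general P p q np nq tp tq hp
    hq hnp hpt hqt hdp hdq hpar halpha hRdisj
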